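/- Correctness of the backward pass of the parallel two-filter smoother: under the linear-Gaussian model assumptions, the suffix products a_{k+1} ⊗ a_{k+2} ⊗ ⋯ ⊗ a_T of the filtering elements under the filtering operator are well defined for every k = 1, …, T−1, and the η-component of a_{k+1} ⊗ ⋯ ⊗ a_T equals η_{k|k+1:T} and its J-component equals J_{k|k+1:T}, where η and J are given by the backward information filter recursion; moreover each J_{k|k+1:T} is symmetric positive semidefinite. -/

import Mathlib

/-!
The `(η, J)`-part of `x ⊗ y` depends on `y` only through its `(η, J)`-part: it is the backward
prediction of that information through the Gaussian transition `(x.A, x.b, x.C)`, plus `x`'s own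
information. By the Woodbury identity the element `a_k` is the transition `(F, Q, u)` conditioned
on `y_k`, written through the measurement information `W = Hᵀ R⁻¹ H`: `A = (I + Q W)⁻¹ F`,
`C = (I + Q W)⁻¹ Q`, `J = Fᵀ (I + W Q)⁻¹ W F`. Since `I + (P + W) Q = (I + P C) (I + W Q)`,
predicting through the conditioned transition and adding the marginal information of `y_k` is the
same as updating with `y_k` and predicting through the original transition; a backward induction
from `T` gives the claim. Update and prediction preserve positive semidefiniteness, and `I + C J`
is invertible whenever `C` and `J` are positive semidefinite.
-/

open Matrix

/-- A filtering element over `ℝⁿ`. -/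
structure FilteringElem (n : ℕ) where
  A : Matrix (Fin n) (Fin n) ℝ
  b : Fin n → ℝ
  C : Matrix (Fin n) (Fin n) ℝ
  η : Fin n → ℝ
  J : Matrix (Fin n) (Fin n) ℝ

/-- The filtering operator `⊗` on filtering elements. -/
noncomputable def filterOp {n : ℕ} (x y : FilteringElem n) : FilteringElem n where
  A := y.A * (1 + x.C * y.J)⁻¹ * x.A
  b := (y.A * (1 + x.C * y.J)⁻¹) *ᵥ (x.b + x.C *ᵥ y.η) + y.b
  C := y.A * (1 + x.C * y.J)⁻¹ * x.C * y.Aᵀ + y.C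
  η := (x.Aᵀ * (1 + y.J * x.C)⁻¹) *ᵥ (y.η - y.J *ᵥ x.b) + x.η
  J := x.Aᵀ * (1 + y.J * x.C)⁻¹ * y.J * x.A + x.J

/-- The data of a linear-Gaussian state-space model. -/
structure LGModel (n m : ℕ) where
  T : ℕ
  F : ℕ → Matrix (Fin n) (Fin n) ℝ
  H : ℕ → Matrix (Fin m) (Fin n) ℝ
  u : ℕ → Fin n → ℝ
  d : ℕ → Fin m → ℝ
  Q : ℕ → Matrix (Fin n) (Fin n) ℝ
  R : ℕ → Matrix (Fin m) (Fin m) ℝ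
  y : ℕ → Fin m → ℝ
  x0 : Fin n → ℝ
  P0 : Matrix (Fin n) (Fin n) ℝ

variable {n m : ℕ}

/-- The filtering element `a_k = (A_k, b_k, C_k, η_k, J_k)` for `k > 1` (only such
elements occur in the suffix products `a_{k+1} ⊗ ⋯ ⊗ a_T` with `k ≥ 1`). -/
noncomputable def LGModel.elem (M : LGModel n m) (k : ℕ) : FilteringElem n :=
  let S := M.H k * M.Q (k - 1) * (M.H k)ᵀ + M.R k
  let K := M.Q (k - 1) * (M.H k)ᵀ * S⁻¹
  { A := (1 - K * M.H k) * M.F (k - 1)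
    b := M.u (k - 1) + K *ᵥ (M.y k - M.H k *ᵥ M.u (k - 1) - M.d k)
    C := (1 - K * M.H k) * M.Q (k - 1)
    η := ((M.F (k - 1))ᵀ * (M.H k)ᵀ * S⁻¹) *ᵥ (M.y k - M.H k *ᵥ M.u (k - 1) - M.d k)
    J := (M.F (k - 1))ᵀ * (M.H k)ᵀ * S⁻¹ * M.H k * M.F (k - 1) }

/-- The suffix products of the filtering elements under the filtering operator:
`fsuff M j = a_{T-j} ⊗ a_{T-j+1} ⊗ ⋯ ⊗ a_T`. -/
noncomputable def LGModel.fsuff (M : LGModel n m) : ℕ → FilteringElem n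
  | 0 => M.elem M.T
  | j + 1 => filterOp (M.elem (M.T - j - 1)) (LGModel.fsuff M j)

/-- The backward information filter recursion (updated quantities):
`bif M j = (η_{T-j|T-j:T}, J_{T-j|T-j:T})`, starting from
`η_{T|T:T} = H_Tᵀ R_T⁻¹ (y_T - d_T)`, `J_{T|T:T} = H_Tᵀ R_T⁻¹ H_T` and alternating the
backward prediction and update steps. -/
noncomputable def LGModel.bif (M : LGModel n m) : ℕ → (Fin n → ℝ) × Matrix (Fin n) (Fin n) ℝ
  | 0 => (((M.H M.T)ᵀ * (M.R M.T)⁻¹) *ᵥ (M.y M.T - M.d M.T),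
          (M.H M.T)ᵀ * (M.R M.T)⁻¹ * M.H M.T)
  | j + 1 =>
    let k := M.T - j - 1
    let prev := LGModel.bif M j
    let G := (M.F k)ᵀ * (1 + prev.2 * M.Q k)⁻¹
    (G *ᵥ (prev.1 - prev.2 *ᵥ M.u k) + ((M.H k)ᵀ * (M.R k)⁻¹) *ᵥ (M.y k - M.d k),
     G * prev.2 * M.F k + (M.H k)ᵀ * (M.R k)⁻¹ * M.H k)

/-- The predicted backward information quantities
`(η_{k|k+1:T}, J_{k|k+1:T})`, obtained by the backward prediction step from
`(η_{k+1|k+1:T}, J_{k+1|k+1:T})`. -/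
noncomputable def LGModel.bpred (M : LGModel n m) (k : ℕ) :
    (Fin n → ℝ) × Matrix (Fin n) (Fin n) ℝ :=
  let prev := M.bif (M.T - k - 1)
  let G := (M.F k)ᵀ * (1 + prev.2 * M.Q k)⁻¹
  (G *ᵥ (prev.1 - prev.2 *ᵥ M.u k), G * prev.2 * M.F k)

namespace Matrix

variable {ι κ : Type*} [Fintype ι] [Fintype κ] [DecidableEq κ]

theorem PosDef.posSemidef_transpose_mul_inv_mul (H : Matrix κ ι ℝ) {R : Matrix κ κ ℝ}
    (hR : R.PosDef) : (Hᵀ * R⁻¹ * H).PosSemidef := by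
  simpa only [conjTranspose_eq_transpose_of_trivial] using
    hR.inv.posSemidef.conjTranspose_mul_mul_same H

variable [DecidableEq ι]

theorem inv_one_add_mul_mul {α : Type*} [CommRing α] (A : Matrix ι κ α) (B : Matrix κ ι α) :
    (1 + A * B)⁻¹ * A = A * (1 + B * A)⁻¹ := by
  have hdet := det_one_add_mul_comm A B
  by_cases h : IsUnit (1 + A * B).det
  · have h' : IsUnit (1 + B * A).det := hdet ▸ h
    have e : (1 + A * B) * A = A * (1 + B * A) := by
      rw [Matrix.add_mul, Matrix.mul_add, Matrix.one_mul, Matrix.mul_one, Matrix.mul_assoc]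
    calc (1 + A * B)⁻¹ * A = (1 + A * B)⁻¹ * ((1 + A * B) * A) * (1 + B * A)⁻¹ := by
          rw [e, Matrix.mul_assoc, Matrix.mul_assoc, mul_nonsing_inv _ h', Matrix.mul_one]
      _ = A * (1 + B * A)⁻¹ := by rw [← Matrix.mul_assoc, nonsing_inv_mul _ h, Matrix.one_mul]
  · have h' : ¬IsUnit (1 + B * A).det := hdet ▸ h
    rw [nonsing_inv_apply_not_isUnit _ h, nonsing_inv_apply_not_isUnit _ h', Matrix.zero_mul,
      Matrix.mul_zero]

theorem one_sub_mul_inv_one_add_mul_mul {α : Type*} [CommRing α] (A : Matrix ι κ α)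
    (B : Matrix κ ι α) (h : IsUnit (1 + A * B)) :
    1 - A * (1 + B * A)⁻¹ * B = (1 + A * B)⁻¹ := by
  rw [← inv_one_add_mul_mul, Matrix.mul_assoc]
  nth_rewrite 1 [← nonsing_inv_mul _ ((isUnit_iff_isUnit_det _).1 h)]
  noncomm_ring

theorem transpose_mul_inv_mul_mul_transpose_add {α : Type*} [CommRing α] (H : Matrix κ ι α)
    (Q : Matrix ι ι α) {R : Matrix κ κ α} (hR : IsUnit R) :
    Hᵀ * (H * Q * Hᵀ + R)⁻¹ = (1 + Hᵀ * R⁻¹ * H * Q)⁻¹ * (Hᵀ * R⁻¹) := by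
  have hR1 : R * R⁻¹ = 1 := mul_nonsing_inv _ ((isUnit_iff_isUnit_det _).1 hR)
  have hS : H * Q * Hᵀ + R = R * (1 + R⁻¹ * H * Q * Hᵀ) := by
    rw [Matrix.mul_add, Matrix.mul_one, ← Matrix.mul_assoc, ← Matrix.mul_assoc,
      ← Matrix.mul_assoc, hR1, Matrix.one_mul, add_comm]
  have e := inv_one_add_mul_mul Hᵀ (R⁻¹ * H * Q)
  rw [hS, Matrix.mul_inv_rev]
  simp only [Matrix.mul_assoc] at e ⊢
  rw [← Matrix.mul_assoc Hᵀ, ← e, Matrix.mul_assoc]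

theorem PosSemidef.isUnit_one_add_mul {A B : Matrix ι ι ℝ} (hA : A.PosSemidef)
    (hB : B.PosSemidef) : IsUnit (1 + A * B) := by
  rw [← mulVec_injective_iff_isUnit]
  refine (injective_iff_map_eq_zero (mulVecLin (1 + A * B))).2 fun z hz => ?_
  rw [mulVecLin_apply, add_mulVec, one_mulVec, ← mulVec_mulVec] at hz
  have hpair : z ⬝ᵥ B *ᵥ z + B *ᵥ z ⬝ᵥ A *ᵥ (B *ᵥ z) = 0 := by
    rw [dotProduct_comm (B *ᵥ z), ← add_dotProduct, hz, zero_dotProduct]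
  have hz0 : z ⬝ᵥ B *ᵥ z = 0 := by
    have := hA.dotProduct_mulVec_nonneg (B *ᵥ z)
    have := hB.dotProduct_mulVec_nonneg z
    simp only [star_trivial] at *
    linarith
  have hBz : B *ᵥ z = 0 := (hB.dotProduct_mulVec_zero_iff z).1 (by simpa using hz0)
  simpa [hBz] using hz

theorem PosSemidef.mul_inv_one_add_mul {A B : Matrix ι ι ℝ} (hA : A.PosSemidef)
    (hB : B.PosSemidef) : (A * (1 + B * A)⁻¹).PosSemidef := by
  set Y := (1 + B * A)⁻¹
  have hY : (1 + B * A) * Y = 1 :=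
    mul_nonsing_inv _ ((isUnit_iff_isUnit_det _).1 (hB.isUnit_one_add_mul hA))
  have hYA : Yᴴ * A = A * Y := by
    rw [conjTranspose_nonsing_inv, conjTranspose_add, conjTranspose_one, conjTranspose_mul,
      hA.1.eq, hB.1.eq, inv_one_add_mul_mul]
  convert (hA.add (hB.conjTranspose_mul_mul_same A)).conjTranspose_mul_mul_same Y using 1
  rw [hA.1.eq, show A + A * B * A = A * (1 + B * A) by noncomm_ring, Matrix.mul_assoc,
    Matrix.mul_assoc, hY, Matrix.mul_one, hYA]

end Matrix

section InformationForm

variable {ι κ : Type*} [Fintype ι] [Fintype κ] [DecidableEq κ]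

/-- Information update with a measurement `z = H x + r`, `Cov r = R`. -/
noncomputable def infoUpdate (H : Matrix κ ι ℝ) (R : Matrix κ κ ℝ) (z : κ → ℝ)
    (ηJ : (ι → ℝ) × Matrix ι ι ℝ) : (ι → ℝ) × Matrix ι ι ℝ :=
  (ηJ.1 + (Hᵀ * R⁻¹) *ᵥ z, ηJ.2 + Hᵀ * R⁻¹ * H)

theorem posSemidef_infoUpdate_snd (H : Matrix κ ι ℝ) {R : Matrix κ κ ℝ} (z : κ → ℝ)
    {ηJ : (ι → ℝ) × Matrix ι ι ℝ} (hR : R.PosDef) (hJ : ηJ.2.PosSemidef) :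
    (infoUpdate H R z ηJ).2.PosSemidef :=
  hJ.add (hR.posSemidef_transpose_mul_inv_mul H)

variable [DecidableEq ι]

/-- Backward prediction of information `(η, J)` through `x' = F x + u + q`, `Cov q = Q`. -/
noncomputable def infoPredict (F Q : Matrix ι ι ℝ) (u : ι → ℝ)
    (ηJ : (ι → ℝ) × Matrix ι ι ℝ) : (ι → ℝ) × Matrix ι ι ℝ :=
  let G := Fᵀ * (1 + ηJ.2 * Q)⁻¹
  (G *ᵥ (ηJ.1 - ηJ.2 *ᵥ u), G * ηJ.2 * F)

@[simp]
theorem infoPredict_zero (F Q : Matrix ι ι ℝ) (u : ι → ℝ) : infoPredict F Q u 0 = 0 := by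
  simp [infoPredict]

theorem posSemidef_infoPredict_snd (F : Matrix ι ι ℝ) {Q : Matrix ι ι ℝ} (u : ι → ℝ)
    {ηJ : (ι → ℝ) × Matrix ι ι ℝ} (hQ : Q.PosSemidef) (hJ : ηJ.2.PosSemidef) :
    (infoPredict F Q u ηJ).2.PosSemidef := by
  have hmid := hJ.mul_inv_one_add_mul hQ
  rw [← inv_one_add_mul_mul] at hmid
  simpa only [infoPredict, conjTranspose_eq_transpose_of_trivial, Matrix.mul_assoc] using
    hmid.conjTranspose_mul_mul_same F

end InformationForm

namespace FilteringElem

def info (x : FilteringElem n) : (Fin n → ℝ) × Matrix (Fin n) (Fin n) ℝ := (x.η, x.J)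

theorem info_filterOp (x y : FilteringElem n) :
    (filterOp x y).info = infoPredict x.A x.C x.b y.info + x.info := rfl

/-- The element of a transition `x' = F x + u + q`, `Cov q = Q`, followed by a measurement
that carries information `(g, W)` about `x' - F x - u`. -/
noncomputable def ofInfo (F Q W : Matrix (Fin n) (Fin n) ℝ) (u g : Fin n → ℝ) :
    FilteringElem n where
  A := (1 + Q * W)⁻¹ * F
  b := u + ((1 + Q * W)⁻¹ * Q) *ᵥ g
  C := (1 + Q * W)⁻¹ * Q
  η := (Fᵀ * (1 + W * Q)⁻¹) *ᵥ g
  J := Fᵀ * (1 + W * Q)⁻¹ * W * F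

variable {F Q W : Matrix (Fin n) (Fin n) ℝ} {u g : Fin n → ℝ}

theorem posSemidef_ofInfo_C (hQ : Q.PosSemidef) (hW : W.PosSemidef) :
    (ofInfo F Q W u g).C.PosSemidef := by
  rw [ofInfo, inv_one_add_mul_mul]
  exact hQ.mul_inv_one_add_mul hW

theorem infoPredict_ofInfo_add_info (hQ : Q.PosSemidef) (hW : W.PosSemidef)
    {ηJ : (Fin n → ℝ) × Matrix (Fin n) (Fin n) ℝ} (hJ : ηJ.2.PosSemidef) :
    infoPredict (ofInfo F Q W u g).A (ofInfo F Q W u g).C (ofInfo F Q W u g).b ηJ +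
        (ofInfo F Q W u g).info = infoPredict F Q u (ηJ.1 + g + W *ᵥ u, ηJ.2 + W) := by
  obtain ⟨p, P⟩ := ηJ
  simp only [infoPredict, ofInfo, info, Prod.mk_add_mk, Prod.mk.injEq]
  set Ei := (1 + Q * W)⁻¹
  set Et := (1 + W * Q)⁻¹
  set C := Ei * Q
  set X := (1 + P * C)⁻¹
  have hEiT : Eiᵀ = Et := by
    rw [transpose_nonsing_inv, transpose_add, transpose_one, transpose_mul,
      (isHermitian_iff_isSymm.1 hQ.1).eq, (isHermitian_iff_isSymm.1 hW.1).eq]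
  have hCEt : C = Q * Et := inv_one_add_mul_mul Q W
  have hEi : Ei = 1 - C * W := by
    rw [hCEt, one_sub_mul_inv_one_add_mul_mul Q W (hQ.isUnit_one_add_mul hW)]
  have hC : C.PosSemidef := hCEt ▸ hQ.mul_inv_one_add_mul hW
  have hX : X * (1 + P * C) = 1 :=
    nonsing_inv_mul _ ((isUnit_iff_isUnit_det _).1 (hJ.isUnit_one_add_mul hC))
  have hinv : (1 + (P + W) * Q)⁻¹ = Et * X := by
    have hEt : Et * (1 + W * Q) = 1 := nonsing_inv_mul _ ((isUnit_iff_isUnit_det _).1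
      (hW.isUnit_one_add_mul hQ))
    have hfac : 1 + (P + W) * Q = (1 + P * C) * (1 + W * Q) := by
      calc 1 + (P + W) * Q = (1 + W * Q) + P * (Q * (Et * (1 + W * Q))) := by
            rw [hEt]; noncomm_ring
        _ = (1 + P * C) * (1 + W * Q) := by rw [hCEt]; noncomm_ring
    rw [hfac, Matrix.mul_inv_rev]
  have hJ : X * P * Ei + W = X * (P + W) := by
    calc X * P * Ei + W = X * (P + W) + (1 - X * (1 + P * C)) * W := by rw [hEi]; noncomm_ring
      _ = X * (P + W) := by rw [hX, sub_self, Matrix.zero_mul, add_zero]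
  have hη : ∀ v, X *ᵥ (v - (P * C) *ᵥ g) + g = X *ᵥ (v + g) := fun v => by
    calc X *ᵥ (v - (P * C) *ᵥ g) + g = X *ᵥ (v + g) + (1 - X * (1 + P * C)) *ᵥ g := by
          simp only [mulVec_sub, mulVec_add, sub_mulVec, one_mulVec, Matrix.mul_add,
            Matrix.mul_one, add_mulVec, mulVec_mulVec]
          abel
      _ = X *ᵥ (v + g) := by rw [hX, sub_self, zero_mulVec, add_zero]
  rw [transpose_mul, hEiT, hinv]
  constructor
  · rw [show p - P *ᵥ (u + C *ᵥ g) = (p - P *ᵥ u) - (P * C) *ᵥ g by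
        rw [mulVec_add, mulVec_mulVec]; abel,
      show p + g + W *ᵥ u - (P + W) *ᵥ u = (p - P *ᵥ u) + g by rw [add_mulVec]; abel,
      ← mulVec_mulVec, ← mulVec_add, hη, mulVec_mulVec, Matrix.mul_assoc]
  · calc Fᵀ * Et * X * P * (Ei * F) + Fᵀ * Et * W * F = Fᵀ * Et * (X * P * Ei + W) * F := by
          noncomm_ring
      _ = Fᵀ * (Et * X) * (P + W) * F := by rw [hJ]; noncomm_ring

end FilteringElem

namespace LGModel

variable (M : LGModel n m)

theorem elem_eq_ofInfo (k : ℕ) (hQ : (M.Q (k - 1)).PosSemidef) (hR : (M.R k).PosDef) :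
    M.elem k = .ofInfo (M.F (k - 1)) (M.Q (k - 1)) ((M.H k)ᵀ * (M.R k)⁻¹ * M.H k) (M.u (k - 1))
      (((M.H k)ᵀ * (M.R k)⁻¹) *ᵥ (M.y k - M.H k *ᵥ M.u (k - 1) - M.d k)) := by
  simp only [elem, FilteringElem.ofInfo, FilteringElem.mk.injEq]
  set F := M.F (k - 1)
  set Q := M.Q (k - 1)
  set H := M.H k
  set R := M.R k
  have hW := hR.posSemidef_transpose_mul_inv_mul H
  have hHS := transpose_mul_inv_mul_mul_transpose_add H Q hR.isUnit
  have hK : Q * Hᵀ * (H * Q * Hᵀ + R)⁻¹ = (1 + Q * (Hᵀ * R⁻¹ * H))⁻¹ * Q * (Hᵀ * R⁻¹) := by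
    rw [Matrix.mul_assoc Q, hHS, ← Matrix.mul_assoc, inv_one_add_mul_mul]
  have hKH : 1 - Q * Hᵀ * (H * Q * Hᵀ + R)⁻¹ * H = (1 + Q * (Hᵀ * R⁻¹ * H))⁻¹ := by
    rw [hK, inv_one_add_mul_mul,
      ← one_sub_mul_inv_one_add_mul_mul Q _ (hQ.isUnit_one_add_mul hW)]
    simp only [Matrix.mul_assoc]
  refine ⟨by rw [hKH], by rw [hK, mulVec_mulVec], by rw [hKH], ?_, ?_⟩
  · rw [Matrix.mul_assoc Fᵀ, hHS, mulVec_mulVec, ← Matrix.mul_assoc]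
  · rw [Matrix.mul_assoc Fᵀ, hHS]
    simp only [Matrix.mul_assoc]

theorem infoPredict_elem_add_info (k : ℕ) (hQ : (M.Q (k - 1)).PosSemidef)
    (hR : (M.R k).PosDef) {ηJ : (Fin n → ℝ) × Matrix (Fin n) (Fin n) ℝ}
    (hJ : ηJ.2.PosSemidef) :
    infoPredict (M.elem k).A (M.elem k).C (M.elem k).b ηJ + (M.elem k).info =
      infoPredict (M.F (k - 1)) (M.Q (k - 1)) (M.u (k - 1))
        (infoUpdate (M.H k) (M.R k) (M.y k - M.d k) ηJ) := by
  rw [M.elem_eq_ofInfo k hQ hR, FilteringElem.infoPredict_ofInfo_add_info hQ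
    (hR.posSemidef_transpose_mul_inv_mul _) hJ, infoUpdate, add_assoc,
    ← mulVec_mulVec (M.u (k - 1)) ((M.H k)ᵀ * (M.R k)⁻¹), ← mulVec_add, sub_right_comm,
    sub_add_cancel]

theorem bif_zero : M.bif 0 = infoUpdate (M.H M.T) (M.R M.T) (M.y M.T - M.d M.T) 0 := by
  simp [LGModel.bif, infoUpdate]

theorem bif_succ (j : ℕ) :
    M.bif (j + 1) = infoUpdate (M.H (M.T - j - 1)) (M.R (M.T - j - 1))
      (M.y (M.T - j - 1) - M.d (M.T - j - 1))
      (infoPredict (M.F (M.T - j - 1)) (M.Q (M.T - j - 1)) (M.u (M.T - j - 1)) (M.bif j)) :=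
  rfl

theorem bpred_eq_infoPredict (k : ℕ) :
    M.bpred k = infoPredict (M.F k) (M.Q k) (M.u k) (M.bif (M.T - k - 1)) :=
  rfl

variable {M}

theorem bif_snd_posSemidef (hQ : ∀ k, k < M.T → (M.Q k).PosSemidef)
    (hR : ∀ k, 1 ≤ k → k ≤ M.T → (M.R k).PosDef) :
    ∀ j, j < M.T → (M.bif j).2.PosSemidef
  | 0, hj => by
    rw [bif_zero]
    exact posSemidef_infoUpdate_snd _ _ (hR _ (by omega) le_rfl) PosSemidef.zero
  | j + 1, hj => by
    rw [bif_succ]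
    exact posSemidef_infoUpdate_snd _ _ (hR _ (by omega) (by omega))
      (posSemidef_infoPredict_snd _ _ (hQ _ (by omega)) (bif_snd_posSemidef hQ hR j (by omega)))

theorem bpred_snd_posSemidef (hQ : ∀ k, k < M.T → (M.Q k).PosSemidef)
    (hR : ∀ k, 1 ≤ k → k ≤ M.T → (M.R k).PosDef) (k : ℕ) (hk : k < M.T) :
    (M.bpred k).2.PosSemidef :=
  posSemidef_infoPredict_snd _ _ (hQ k hk) (bif_snd_posSemidef hQ hR _ (by omega))

theorem fsuff_info (hQ : ∀ k, k < M.T → (M.Q k).PosSemidef)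
    (hR : ∀ k, 1 ≤ k → k ≤ M.T → (M.R k).PosDef) :
    ∀ j, j + 1 < M.T → (M.fsuff j).info = M.bpred (M.T - j - 1)
  | 0, hj => by
    have e : M.T - (M.T - 1) - 1 = 0 := by omega
    calc (M.fsuff 0).info
        = infoPredict (M.elem M.T).A (M.elem M.T).C (M.elem M.T).b 0 + (M.elem M.T).info := by
          rw [infoPredict_zero, zero_add]; rfl
      _ = M.bpred (M.T - 0 - 1) := by
          rw [M.infoPredict_elem_add_info _ (hQ _ (by omega)) (hR _ (by omega) le_rfl)
            PosSemidef.zero, bpred_eq_infoPredict, Nat.sub_zero, e, bif_zero]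
  | j + 1, hj => by
    have e1 : M.T - (j + 1) - 1 = M.T - j - 1 - 1 := by omega
    have e2 : M.T - (M.T - j - 1 - 1) - 1 = j + 1 := by omega
    have e3 : M.T - (M.T - j - 1) - 1 = j := by omega
    rw [fsuff, FilteringElem.info_filterOp, fsuff_info hQ hR j (by omega),
      M.infoPredict_elem_add_info _ (hQ _ (by omega)) (hR _ (by omega) (by omega))
        (bpred_snd_posSemidef hQ hR _ (by omega)), e1, bpred_eq_infoPredict M (M.T - j - 1 - 1), e2,
      bif_succ, bpred_eq_infoPredict, e3]

end LGModel

theorem two_filter_backward_pass_correct_general (M : LGModel n m)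
    (hQ : ∀ k, k < M.T → (M.Q k).PosSemidef)
    (hR : ∀ k, 1 ≤ k → k ≤ M.T → (M.R k).PosDef) :
    (∀ k, 2 ≤ k → k ≤ M.T - 1 →
      IsUnit (1 + (M.elem k).C * (M.fsuff (M.T - k - 1)).J)) ∧
    (∀ k, 1 ≤ k → k ≤ M.T - 1 →
      (M.fsuff (M.T - k - 1)).η = (M.bpred k).1 ∧
      (M.fsuff (M.T - k - 1)).J = (M.bpred k).2 ∧
      ((M.bpred k).2).PosSemidef) := by
  have hinfo : ∀ k, 1 ≤ k → k ≤ M.T - 1 → (M.fsuff (M.T - k - 1)).info = M.bpred k :=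
    fun k _ hk => by
      rw [LGModel.fsuff_info hQ hR _ (by omega), show M.T - (M.T - k - 1) - 1 = k by omega]
  refine ⟨fun k hk1 hk2 => ?_, fun k hk1 hk2 => ⟨congrArg Prod.fst (hinfo k hk1 hk2),
    congrArg Prod.snd (hinfo k hk1 hk2), LGModel.bpred_snd_posSemidef hQ hR k (by omega)⟩⟩
  have hQk := hQ (k - 1) (by omega)
  have hRk := hR k (by omega) (by omega)
  rw [show (M.fsuff (M.T - k - 1)).J = (M.bpred k).2 from
      congrArg Prod.snd (hinfo k (by omega) hk2), M.elem_eq_ofInfo k hQk hRk]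
  exact (FilteringElem.posSemidef_ofInfo_C hQk (hRk.posSemidef_transpose_mul_inv_mul _)
    ).isUnit_one_add_mul (LGModel.bpred_snd_posSemidef hQ hR k (by omega))

/-- Correctness of the backward pass of the parallel two-filter smoother: under the
linear-Gaussian model assumptions, the suffix products `a_{k+1} ⊗ ⋯ ⊗ a_T` of the
filtering elements are well defined (the matrices `I + C·J` appearing in the
successive applications of the filtering operator are invertible) for every
`k = 1, …, T-1`, the `η`-component of `a_{k+1} ⊗ ⋯ ⊗ a_T` equals `η_{k|k+1:T}` and
its `J`-component equals `J_{k|k+1:T}` from the backward information filter recursion,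
and each `J_{k|k+1:T}` is symmetric positive semidefinite. -/
theorem two_filter_backward_pass_correct (M : LGModel n m) (hT : 1 ≤ M.T)
    (hQ : ∀ k, k < M.T → (M.Q k).PosSemidef)
    (hR : ∀ k, 1 ≤ k → k ≤ M.T → (M.R k).PosDef)
    (hP0 : M.P0.PosSemidef) :
    (∀ k, 2 ≤ k → k ≤ M.T - 1 →
      IsUnit (1 + (M.elem k).C * (M.fsuff (M.T - k - 1)).J)) ∧
    (∀ k, 1 ≤ k → k ≤ M.T - 1 →
      (M.fsuff (M.T - k - 1)).η = (M.bpred k).1 ∧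
      (M.fsuff (M.T - k - 1)).J = (M.bpred k).2 ∧
      ((M.bpred k).2).PosSemidef) :=
  two_filter_backward_pass_correct_general M hQ hR
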